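/- arXiv:2108.11890 — 3 statements merged into one kernel-verified Lean document; each statement's English description precedes it below -/
import Mathlib

section
/- Let 2 ≤ ℓ ≤ n. Let (A_1,…,A_ℓ) be a uniformly random ℓ-tuple of distinct elements of {1,…,n}, and, conditionally on it, let B_1,…,B_{ℓ−1} be independent with B_i uniform on {A_1,…,A_i} for each i. Then the permutation σ := (B_1 A_2)∘(B_2 A_3)∘⋯∘(B_{ℓ−1} A_ℓ) of {1,…,n}, the composition of these transpositions, is uniformly distributed on the set of ℓ-cycles of the symmetric group on {1,…,n}. -/
open scoped Classical

noncomputable section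

/- STATEMENT 12 set-up.  A sample is a pair `(A, B)` of functions `Fin ℓ → Fin n`:
`A` is the injective tuple `(A_1, …, A_ℓ)` and `B i` is uniform on `{A j : j ≤ i}`.
All valid samples are equally likely (the conditional probabilities `1/(i+1)` do not
depend on the values), so the process is the uniform distribution on the set of valid
samples.  (The last coordinate of `B` is a dummy, not used in the permutation; it
multiplies every fibre count by the same factor `ℓ`.) -/

open Equiv Equiv.Perm Finset

section Aux

variable {α : Type*} [DecidableEq α] [Fintype α]

lemma cycle_extend {c : Perm α} (hc : c.IsCycle) {x y : α}
    (hx : x ∈ c.support) (hy : y ∉ c.support) :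
    (c * swap x y).IsCycle ∧ (c * swap x y).support = insert y c.support := by
  set c' := c * swap x y with hc'
  have hxy : x ≠ y := fun h => hy (h ▸ hx)
  have hcy : c y = y := by simpa using hy
  have hcx : c x ≠ x := mem_support.mp hx
  have hc'x : c' x = y := by simp [hc', Perm.mul_apply, swap_apply_left, hcy]
  have hc'y : c' y = c x := by simp [hc', Perm.mul_apply, swap_apply_right]
  have hc'other : ∀ z, z ≠ x → z ≠ y → c' z = c z := fun z h1 h2 => by
    simp [hc', Perm.mul_apply, swap_apply_of_ne_of_ne h1 h2]
  have hpow : ∀ (k : ℕ), (c ^ k) x ∈ c.support := fun k => by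
    rw [Perm.mem_support, ← Perm.mul_apply, ← pow_succ', pow_succ, Perm.mul_apply]
    exact fun h => hcx ((c ^ k).injective h)
  have key : ∀ b, c' b ≠ b → c'.SameCycle x b := by
    intro b hb
    rcases eq_or_ne b x with rfl | hbx
    · exact SameCycle.refl _ _
    rcases eq_or_ne b y with rfl | hby
    · refine ⟨1, ?_⟩
      simpa using hc'x
    have hcb : c b ≠ b := by rwa [hc'other b hbx hby] at hb
    obtain ⟨j₀, hj₀⟩ := hc.exists_pow_eq hcx hcb
    have hS : ∃ j, (c ^ j) x = b := ⟨j₀, hj₀⟩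
    set j := Nat.find hS with hjdef
    have hj : (c ^ j) x = b := Nat.find_spec hS
    have hj1 : 1 ≤ j := by
      rcases Nat.eq_zero_or_pos j with h | h
      · exact absurd (by simpa [h] using hj) (Ne.symm hbx)
      · exact h
    have hne_x : ∀ i, 0 < i → i < j → (c ^ i) x ≠ x := by
      intro i hi0 hij h
      have : (c ^ (j - i)) x = b := by
        rw [← h, ← Perm.mul_apply, ← pow_add, Nat.sub_add_cancel hij.le, hj]
      exact absurd (Nat.find_le this : j ≤ j - i) (by omega)
    have main : ∀ i, 1 ≤ i → i ≤ j → (c' ^ (i + 1)) x = (c ^ i) x := by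
      intro i
      induction i with
      | zero => intro h; omega
      | succ i ih =>
        intro _ hle
        rcases Nat.eq_zero_or_pos i with rfl | hi0
        · simp only [zero_add, pow_one, pow_succ, pow_zero, one_mul, Perm.mul_apply, hc'x, hc'y]
        · have hprev := ih hi0 (by omega)
          have h1 : (c ^ i) x ≠ x := hne_x i hi0 (by omega)
          have h2 : (c ^ i) x ≠ y := fun h => hy (h ▸ hpow i)
          calc (c' ^ (i + 1 + 1)) x = c' ((c' ^ (i + 1)) x) := by
                rw [pow_succ', Perm.mul_apply]
            _ = c' ((c ^ i) x) := by rw [hprev]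
            _ = c ((c ^ i) x) := hc'other _ h1 h2
            _ = (c ^ (i + 1)) x := by rw [pow_succ', Perm.mul_apply]
    exact ⟨(j + 1 : ℕ), by rw [zpow_natCast, main j hj1 le_rfl, hj]⟩
  have hcyc : c'.IsCycle := ⟨x, by rw [hc'x]; exact Ne.symm hxy, key⟩
  refine ⟨hcyc, ?_⟩
  ext z
  simp only [Perm.mem_support, Finset.mem_insert]
  rcases eq_or_ne z y with rfl | hzy
  · have hcxs : c x ∈ c.support := by simpa using hpow 1
    have hne : c' z ≠ z := by rw [hc'y]; exact fun h => hy (h ▸ hcxs)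
    simp [hne]
  · rcases eq_or_ne z x with rfl | hzx
    · simp [hc'x, Ne.symm hxy, hxy, Perm.mem_support.mp hx]
    · rw [hc'other z hzx hzy]
      simp [hzy, Perm.mem_support]

end Aux

/-- The valid samples `(A, B)`. -/
def sampleSet (n ℓ : ℕ) : Finset ((Fin ℓ → Fin n) × (Fin ℓ → Fin n)) :=
  Finset.univ.filter fun AB =>
    Function.Injective AB.1 ∧ ∀ i : Fin ℓ, ∃ j : Fin ℓ, j ≤ i ∧ AB.2 i = AB.1 j

/-- The permutation `σ = (B_1 A_2) ∘ (B_2 A_3) ∘ ⋯ ∘ (B_{ℓ-1} A_ℓ)` (0-indexed: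
the product over `i = 0, …, ℓ-2` of the transpositions `(B_i, A_{i+1})`, the rightmost
factor acting first). -/
def buildPerm (n ℓ : ℕ) (A B : Fin ℓ → Fin n) : Equiv.Perm (Fin n) :=
  ((List.range ℓ).map fun i =>
    if h : i + 1 < ℓ then Equiv.swap (B ⟨i, Nat.lt_of_succ_lt h⟩) (A ⟨i + 1, h⟩)
    else 1).prod

/-- The `ℓ`-cycles of the symmetric group on `{1, …, n}`. -/
def lCycles (n ℓ : ℕ) : Finset (Equiv.Perm (Fin n)) :=
  Finset.univ.filter fun c => c.IsCycle ∧ c.support.card = ℓ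

lemma buildPerm_isCycle (n ℓ : ℕ) (h2 : 2 ≤ ℓ) (A B : Fin ℓ → Fin n)
    (hA : Function.Injective A) (hB : ∀ i : Fin ℓ, ∃ j : Fin ℓ, j ≤ i ∧ B i = A j) :
    (buildPerm n ℓ A B).IsCycle ∧ (buildPerm n ℓ A B).support.card = ℓ := by
  set f : ℕ → Perm (Fin n) := fun i =>
    if h : i + 1 < ℓ then Equiv.swap (B ⟨i, Nat.lt_of_succ_lt h⟩) (A ⟨i + 1, h⟩)
    else 1 with hf
  set S : ℕ → Finset (Fin n) := fun m =>
    Finset.image A (Finset.univ.filter fun j : Fin ℓ => (j : ℕ) ≤ m) with hS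
  set σ : ℕ → Perm (Fin n) := fun m => ((List.range m).map f).prod with hσ
  have key : ∀ m, 1 ≤ m → m + 1 ≤ ℓ → (σ m).IsCycle ∧ (σ m).support = S m := by
    intro m
    induction m with
    | zero => omega
    | succ m ih =>
      intro _ hle
      have hstep : σ (m + 1) = σ m * f m := by
        simp [hσ, List.range_succ]
      rcases Nat.eq_zero_or_pos m with rfl | hm
      · -- base case : σ 1 = f 0 = swap (A 0) (A 1)
        have h1ℓ : 1 < ℓ := by omega
        have hf0 : f 0 = Equiv.swap (B ⟨0, by omega⟩) (A ⟨1, h1ℓ⟩) := by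
          simp [hf, h1ℓ]
        obtain ⟨j, hj, hBj⟩ := hB ⟨0, by omega⟩
        have hj0 : j = ⟨0, by omega⟩ := by
          have hv : (j : ℕ) ≤ 0 := by simpa using Fin.le_def.mp hj
          exact Fin.ext (Nat.le_zero.mp hv)
        have hB0 : B ⟨0, by omega⟩ = A ⟨0, by omega⟩ := by rw [hBj, hj0]
        have hne : A (⟨0, by omega⟩ : Fin ℓ) ≠ A ⟨1, h1ℓ⟩ := fun h =>
          absurd (congrArg Fin.val (hA h)) (by simp)
        have hσ1 : σ 1 = Equiv.swap (A ⟨0, by omega⟩) (A ⟨1, h1ℓ⟩) := by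
          have h01 : σ 1 = f 0 := by simp [hσ, List.range_succ]
          rw [h01, hf0, hB0]
        have hfilt : (Finset.univ.filter fun j : Fin ℓ => (j : ℕ) ≤ 0 + 1) =
            {(⟨0, by omega⟩ : Fin ℓ), ⟨1, h1ℓ⟩} := by
          ext j
          simp only [Finset.mem_filter, Finset.mem_univ, true_and, Finset.mem_insert,
            Finset.mem_singleton, zero_add]
          constructor
          · intro h
            rcases Nat.le_one_iff_eq_zero_or_eq_one.mp h with h | h
            · exact Or.inl (Fin.ext h)
            · exact Or.inr (Fin.ext h)
          · rintro (rfl | rfl) <;> simp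
        constructor
        · rw [hσ1]; exact isCycle_swap hne
        · rw [hσ1, support_swap hne]
          simp only [hS]
          rw [hfilt]
          simp
      · -- inductive step
        obtain ⟨hcyc, hsupp⟩ := ih hm (by omega)
        have hmlt : m + 1 < ℓ := by omega
        have hfm : f m = Equiv.swap (B ⟨m, by omega⟩) (A ⟨m + 1, hmlt⟩) := by
          simp [hf, hmlt]
        obtain ⟨j, hj, hBj⟩ := hB ⟨m, by omega⟩
        have hjm : (j : ℕ) ≤ m := Fin.le_def.mp hj
        have hxmem : B ⟨m, by omega⟩ ∈ (σ m).support := by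
          rw [hsupp, hS]
          exact Finset.mem_image.mpr ⟨j, Finset.mem_filter.mpr ⟨Finset.mem_univ _, hjm⟩,
            hBj.symm⟩
        have hymem : A ⟨m + 1, hmlt⟩ ∉ (σ m).support := by
          rw [hsupp]
          simp only [hS]
          intro h
          obtain ⟨j', hj', hAj'⟩ := Finset.mem_image.mp h
          have hj'2 : (j' : ℕ) ≤ m := (Finset.mem_filter.mp hj').2
          rw [hA hAj'] at hj'2
          exact absurd hj'2 (by simp)
        obtain ⟨hcyc', hsupp'⟩ := cycle_extend hcyc hxmem hymem
        rw [← hfm] at hcyc' hsupp'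
        rw [← hstep] at hcyc' hsupp'
        refine ⟨hcyc', ?_⟩
        rw [hsupp', hsupp]
        simp only [hS]
        have : (Finset.univ.filter fun j : Fin ℓ => (j : ℕ) ≤ m + 1) =
            insert (⟨m + 1, hmlt⟩ : Fin ℓ)
              (Finset.univ.filter fun j : Fin ℓ => (j : ℕ) ≤ m) := by
          ext j'
          simp only [Finset.mem_filter, Finset.mem_univ, true_and, Finset.mem_insert]
          constructor
          · intro h
            rcases Nat.lt_or_ge (j' : ℕ) (m + 1) with h' | h'
            · exact Or.inr (by omega)
            · exact Or.inl (Fin.ext (show (j' : ℕ) = m + 1 by omega))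
          · rintro (rfl | h)
            · simp
            · omega
        rw [this, Finset.image_insert]
  obtain ⟨k, rfl⟩ : ∃ k, ℓ = k + 1 := ⟨ℓ - 1, by omega⟩
  have hbp : buildPerm n (k + 1) A B = σ k := by
    have : buildPerm n (k + 1) A B = σ (k + 1) := rfl
    rw [this]
    have hfk : f k = 1 := by simp [hf]
    simp [hσ, List.range_succ, hfk]
  obtain ⟨hcyc, hsupp⟩ := key k (by omega) le_rfl
  refine ⟨hbp ▸ hcyc, ?_⟩
  rw [hbp, hsupp]
  simp only [hS]
  have : (Finset.univ.filter fun j : Fin (k + 1) => (j : ℕ) ≤ k) = Finset.univ := by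
    ext j; simp [Nat.lt_succ_iff.mp j.isLt]
  rw [this, Finset.card_image_of_injective _ hA, Finset.card_univ, Fintype.card_fin]

lemma buildPerm_conj (n ℓ : ℕ) (π : Equiv.Perm (Fin n)) (A B : Fin ℓ → Fin n) :
    buildPerm n ℓ (π ∘ A) (π ∘ B) = π * buildPerm n ℓ A B * π⁻¹ := by
  unfold buildPerm
  have h1 : π * ((List.range ℓ).map fun i =>
      if h : i + 1 < ℓ then Equiv.swap (B ⟨i, Nat.lt_of_succ_lt h⟩) (A ⟨i + 1, h⟩)
      else 1).prod * π⁻¹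
      = (MulAut.conj π) (((List.range ℓ).map fun i =>
      if h : i + 1 < ℓ then Equiv.swap (B ⟨i, Nat.lt_of_succ_lt h⟩) (A ⟨i + 1, h⟩)
      else 1).prod) := by
    simp [MulAut.conj_apply]
  rw [h1, map_list_prod, List.map_map]
  congr 1
  apply List.map_congr_left
  intro i _
  by_cases h : i + 1 < ℓ
  · simp only [Function.comp_apply, h, dif_pos, MulAut.conj_apply]
    rw [← Equiv.swap_apply_apply]
  · simp [h]

/-- with `(A_1,…,A_ℓ)` a uniform tuple of distinct elements and `B_i`
uniform on `{A_1,…,A_i}` (independently), the permutation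
`(B_1 A_2)(B_2 A_3)⋯(B_{ℓ-1} A_ℓ)` is uniformly distributed on the `ℓ`-cycles:
every valid sample yields an `ℓ`-cycle, and every `ℓ`-cycle is hit by the same number
of (equally likely) samples. -/
theorem uniform_cycle_via_transpositions (n ℓ : ℕ) (h2 : 2 ≤ ℓ) (hn : ℓ ≤ n) :
    (∀ AB ∈ sampleSet n ℓ, buildPerm n ℓ AB.1 AB.2 ∈ lCycles n ℓ) ∧
    ∀ c ∈ lCycles n ℓ,
      ((sampleSet n ℓ).filter fun AB => buildPerm n ℓ AB.1 AB.2 = c).card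
          * (lCycles n ℓ).card
        = (sampleSet n ℓ).card := by
  have hmem : ∀ AB : (Fin ℓ → Fin n) × (Fin ℓ → Fin n), AB ∈ sampleSet n ℓ ↔
      Function.Injective AB.1 ∧ ∀ i : Fin ℓ, ∃ j : Fin ℓ, j ≤ i ∧ AB.2 i = AB.1 j := by
    intro AB
    simp [sampleSet]
  have part1 : ∀ AB ∈ sampleSet n ℓ, buildPerm n ℓ AB.1 AB.2 ∈ lCycles n ℓ := by
    intro AB hAB
    obtain ⟨hA, hB⟩ := (hmem AB).mp hAB
    obtain ⟨h1, h2'⟩ := buildPerm_isCycle n ℓ h2 AB.1 AB.2 hA hB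
    simp [lCycles, h1, h2']
  refine ⟨part1, ?_⟩
  intro c hc
  -- all fibres have the same cardinality
  have fibre_eq : ∀ c' ∈ lCycles n ℓ,
      ((sampleSet n ℓ).filter fun AB => buildPerm n ℓ AB.1 AB.2 = c').card
      = ((sampleSet n ℓ).filter fun AB => buildPerm n ℓ AB.1 AB.2 = c).card := by
    intro c' hc'
    simp only [lCycles, Finset.mem_filter, Finset.mem_univ, true_and] at hc hc'
    have hconj : IsConj c' c := hc'.1.isConj hc.1 (by rw [hc'.2, hc.2])
    obtain ⟨π, hπ⟩ := isConj_iff.mp hconj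
    -- map (A, B) ↦ (π ∘ A, π ∘ B) sends fibre of c' to fibre of c
    refine Finset.card_bij' (fun AB _ => (π ∘ AB.1, π ∘ AB.2))
      (fun AB _ => ((π⁻¹ : Perm (Fin n)) ∘ AB.1, (π⁻¹ : Perm (Fin n)) ∘ AB.2))
      ?_ ?_ ?_ ?_
    · intro AB hAB
      simp only [Finset.mem_filter] at hAB ⊢
      obtain ⟨hs, hb⟩ := hAB
      obtain ⟨hA, hB⟩ := (hmem AB).mp hs
      constructor
      · refine (hmem _).mpr ⟨π.injective.comp hA, fun i => ?_⟩
        obtain ⟨j, hj, hBj⟩ := hB i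
        exact ⟨j, hj, by simp [hBj]⟩
      · rw [buildPerm_conj, hb, hπ]
    · intro AB hAB
      simp only [Finset.mem_filter] at hAB ⊢
      obtain ⟨hs, hb⟩ := hAB
      obtain ⟨hA, hB⟩ := (hmem AB).mp hs
      constructor
      · refine (hmem _).mpr ⟨(π⁻¹ : Perm (Fin n)).injective.comp hA, fun i => ?_⟩
        obtain ⟨j, hj, hBj⟩ := hB i
        exact ⟨j, hj, by simp [hBj]⟩
      · rw [buildPerm_conj, hb, ← hπ]
        group
    · intro AB _
      ext x <;> simp
    · intro AB _
      ext x <;> simp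
  have hsum : (sampleSet n ℓ).card
      = ∑ c' ∈ lCycles n ℓ,
        ((sampleSet n ℓ).filter fun AB => buildPerm n ℓ AB.1 AB.2 = c').card :=
    Finset.card_eq_sum_card_fiberwise part1
  rw [hsum, Finset.sum_congr rfl fibre_eq, Finset.sum_const, smul_eq_mul, mul_comm]


end
end

section
/- Let η ∈ M_n and let p, q be two distinct pairs of η whose elements lie in different connected components of the multigraph ({1,…,2n}, η ⊎ id_n), these components having sizes 2a and 2b respectively. Let η' be either one of the two n-PMs that agree with η outside p ∪ q and match the four elements of p ∪ q differently from η. Then the connected components of ({1,…,2n}, η' ⊎ id_n) are the same as those of ({1,…,2n}, η ⊎ id_n), except that the two components containing p and q are replaced by a single cycle on the union of their vertex sets, of size 2(a+b). -/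
open scoped Classical

noncomputable section

/-- A perfect matching on `2n` objects, encoded as a fixed-point-free involution of
`Fin n × Bool`; the element `(i, b)` encodes the object `2i+1` (if `b = false`)
or `2i+2` (if `b = true`) of `{1, …, 2n}`. The pairs of the matching are the orbits. -/
abbrev PM (n : ℕ) : Type :=
  {σ : Equiv.Perm (Fin n × Bool) // Function.Involutive ⇑σ ∧ ∀ x, σ x ≠ x}

/-- The identity matching `id_n = {{1,2},…,{2n-1,2n}}`. -/
def idPM (n : ℕ) : PM n :=
  ⟨⟨fun x => (x.1, !x.2), fun x => (x.1, !x.2), fun x => by simp, fun x => by simp⟩,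
    fun x => by simp, fun x => by simp [Prod.ext_iff]⟩

/-- The (simple graph underlying the) multigraph with edge multiset `η ⊎ μ`. -/
def matchGraph {n : ℕ} (η μ : PM n) : SimpleGraph (Fin n × Bool) where
  Adj x y := x ≠ y ∧ (η.1 x = y ∨ μ.1 x = y)
  symm := ⟨by
    rintro x y ⟨hne, h | h⟩
    · exact ⟨hne.symm, Or.inl (by rw [← h]; exact η.2.1 x)⟩
    · exact ⟨hne.symm, Or.inr (by rw [← h]; exact μ.2.1 x)⟩⟩
  loopless := ⟨by rintro x ⟨hne, -⟩; exact hne rfl⟩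

/-- `cycleCount η μ ℓ` is the number of connected components of size `2ℓ`
of the multigraph `η ⊎ μ`; `cycleCount η (idPM n)` is the cycle structure `C(η)`. -/
def cycleCount {n : ℕ} (η μ : PM n) (ℓ : ℕ) : ℕ :=
  Nat.card {c : (matchGraph η μ).ConnectedComponent // Nat.card c.supp = 2 * ℓ}

/-- Total variation distance, `max_A |μ(A) - ν(A)|`. -/
def TV {Ω : Type*} (μ ν : Ω → ℝ) : ℝ :=
  ⨆ A : Finset Ω, |∑ x ∈ A, μ x - ∑ x ∈ A, ν x|

/-- Pushforward of a (finitely supported) distribution along a map. -/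
def push {Ω : Type*} [Fintype Ω] {S : Type*} (f : Ω → S) (μ : Ω → ℝ) : S → ℝ :=
  fun s => ∑ x ∈ Finset.univ.filter (fun x => f x = s), μ x

/-- The `η`-invariant subsets of size `2k`, i.e. the unions of `k` pairs of `η`. -/
def invSets {n : ℕ} (η : PM n) (k : ℕ) : Finset (Finset (Fin n × Bool)) :=
  Finset.univ.filter fun T => T.card = 2 * k ∧ ∀ x ∈ T, η.1 x ∈ T

/-- `Compat η T η'` : the matching `η'` agrees with `η` outside `T` and matches
the elements of `T` among themselves. -/
def Compat {n : ℕ} (η : PM n) (T : Finset (Fin n × Bool)) (η' : PM n) : Prop :=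
  (∀ x, x ∉ T → η'.1 x = η.1 x) ∧ ∀ x ∈ T, η'.1 x ∈ T

/-- One-step transition kernel of the `k`-PM random walk: choose `k` pairs of `η`
uniformly (i.e. an `η`-invariant set `T` of size `2k`) and rematch the `2k` covered
elements by an independent uniform perfect matching of them. -/
def kernel (n k : ℕ) (η η' : PM n) : ℝ :=
  (∑ T ∈ invSets η k,
      if Compat η T η' then ((Finset.univ.filter fun η'' : PM n => Compat η T η'').card : ℝ)⁻¹
      else 0) / ((invSets η k).card : ℝ)

/-- Law at time `t` of the `k`-PM random walk started at `η₀`. -/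
def pmLaw (n k : ℕ) (η₀ : PM n) : ℕ → PM n → ℝ
  | 0 => fun η => if η = η₀ then 1 else 0
  | t + 1 => fun η => ∑ η' : PM n, pmLaw n k η₀ t η' * kernel n k η' η

/-- The uniform distribution on `PM n`. -/
def unifPM (n : ℕ) : PM n → ℝ := fun _ => (Fintype.card (PM n) : ℝ)⁻¹

/-- `d_n(t)`: worst-case (over the starting matching) total variation distance to
uniformity at time `t` for the `k`-PM random walk. -/
def dTV (n k t : ℕ) : ℝ := ⨆ η₀ : PM n, TV (pmLaw n k η₀ t) (unifPM n)

/-- The swap graph: two matchings are adjacent if one is obtained from the other by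
a single swap (rematching two of its pairs differently). -/
def swapGraph (n : ℕ) : SimpleGraph (PM n) where
  Adj η η' := η ≠ η' ∧ ∃ T : Finset (Fin n × Bool), T.card = 4 ∧
    (∀ x ∈ T, η.1 x ∈ T) ∧ (∀ x ∈ T, η'.1 x ∈ T) ∧ ∀ x, x ∉ T → η.1 x = η'.1 x
  symm := ⟨by
    rintro η η' ⟨hne, T, hT, h1, h2, h3⟩
    exact ⟨hne.symm, T, hT, h2, h1, fun x hx => (h3 x hx).symm⟩⟩
  loopless := ⟨fun η h => h.1 rfl⟩


/-- The four elements covered by the pairs of `η` containing `x` and `y`. -/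
def swapSet {n : ℕ} (η : PM n) (x y : Fin n × Bool) : Finset (Fin n × Bool) :=
  {x, η.1 x, y, η.1 y}


section SwapHelpers

variable {n : ℕ}

private lemma walk_closed {V : Type*} {G : SimpleGraph V} {P : Set V}
    (h : ∀ a b, G.Adj a b → a ∈ P → b ∈ P) :
    ∀ {z u : V}, G.Walk z u → z ∈ P → u ∈ P := by
  intro z u w
  induction w with
  | nil => exact id
  | cons h' _ ih => exact fun hz => ih (h _ _ h' hz)

private lemma reach_closed {V : Type*} {G : SimpleGraph V} {P : Set V}
    (h : ∀ a b, G.Adj a b → a ∈ P → b ∈ P) {z u : V}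
    (hr : G.Reachable z u) (hz : z ∈ P) : u ∈ P := by
  obtain ⟨w⟩ := hr; exact walk_closed h w hz

private lemma adj_fst (μ ν : PM n) (u : Fin n × Bool) :
    (matchGraph μ ν).Adj u (μ.1 u) := ⟨(μ.2.2 u).symm, Or.inl rfl⟩

private lemma adj_snd (μ ν : PM n) (u : Fin n × Bool) :
    (matchGraph μ ν).Adj u (ν.1 u) := ⟨(ν.2.2 u).symm, Or.inr rfl⟩

private lemma adj_cases {μ ν : PM n} {u v : Fin n × Bool}
    (h : (matchGraph μ ν).Adj u v) : v = μ.1 u ∨ v = ν.1 u := by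
  rcases h with ⟨-, h | h⟩
  · exact Or.inl h.symm
  · exact Or.inr h.symm

private lemma even_card_invol {α : Type*} [DecidableEq α] (f : α → α) (E : Finset α)
    (h1 : ∀ u ∈ E, f u ∈ E) (h2 : ∀ u ∈ E, f (f u) = u) (h3 : ∀ u ∈ E, f u ≠ u) :
    Even E.card := by
  induction E using Finset.strongInduction with
  | _ E ih =>
    rcases E.eq_empty_or_nonempty with rfl | ⟨u, hu⟩
    · simp
    · have hfu : f u ∈ E := h1 u hu
      have hne : f u ≠ u := h3 u hu
      have hfuE : f u ∈ E.erase u := Finset.mem_erase.mpr ⟨hne, hfu⟩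
      have hFsub : (E.erase u).erase (f u) ⊂ E :=
        ((Finset.erase_subset _ _).trans (Finset.erase_subset _ _)).ssubset_of_ne
          (by intro hEq
              have : u ∈ (E.erase u).erase (f u) := by rw [hEq]; exact hu
              simp [Finset.mem_erase] at this)
      have hmemF : ∀ v, v ∈ (E.erase u).erase (f u) ↔ v ≠ f u ∧ v ≠ u ∧ v ∈ E := by
        intro v; simp [Finset.mem_erase, and_assoc]
      have hF1 : ∀ v ∈ (E.erase u).erase (f u), f v ∈ (E.erase u).erase (f u) := by
        intro v hv
        obtain ⟨hv1, hv2, hv3⟩ := (hmemF v).mp hv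
        refine (hmemF _).mpr ⟨?_, ?_, h1 v hv3⟩
        · intro h
          exact hv2 (by rw [← h2 v hv3, h, h2 u hu])
        · intro h
          exact hv1 (by rw [← h2 v hv3, h])
      have hevF : Even ((E.erase u).erase (f u)).card :=
        ih _ hFsub hF1 (fun v hv => h2 v ((hmemF v).mp hv).2.2)
          (fun v hv => h3 v ((hmemF v).mp hv).2.2)
      have hc1 : (E.erase u).card = E.card - 1 := Finset.card_erase_of_mem hu
      have hc2 : ((E.erase u).erase (f u)).card = (E.erase u).card - 1 :=
        Finset.card_erase_of_mem hfuE
      have hp1 : 0 < E.card := Finset.card_pos.mpr ⟨u, hu⟩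
      have hp2 : 0 < (E.erase u).card := Finset.card_pos.mpr ⟨f u, hfuE⟩
      obtain ⟨m, hm⟩ := hevF
      exact ⟨m + 1, by omega⟩

end SwapHelpers

/-- rematching two pairs of `η` lying in *different* components (of sizes
`2a` and `2b`) of the multigraph `η ⊎ id_n` merges these two components into a single
cycle on the union of their vertex sets, of size `2(a+b)`, and leaves all other
components unchanged. -/
theorem swap_merges_components (n : ℕ) (η η' : PM n) (x y : Fin n × Bool) (a b : ℕ)
    (hreach : ¬ (matchGraph η (idPM n)).Reachable x y)
    (ha : Nat.card ((matchGraph η (idPM n)).connectedComponentMk x).supp = 2 * a)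
    (hb : Nat.card ((matchGraph η (idPM n)).connectedComponentMk y).supp = 2 * b)
    (hoff : ∀ z, z ∉ swapSet η x y → η'.1 z = η.1 z)
    (hinv : ∀ z ∈ swapSet η x y, η'.1 z ∈ swapSet η x y)
    (hne : η' ≠ η) :
    ((matchGraph η' (idPM n)).connectedComponentMk x).supp
        = ((matchGraph η (idPM n)).connectedComponentMk x).supp
          ∪ ((matchGraph η (idPM n)).connectedComponentMk y).supp ∧
    Nat.card (((matchGraph η (idPM n)).connectedComponentMk x).supp
        ∪ ((matchGraph η (idPM n)).connectedComponentMk y).supp : Set (Fin n × Bool))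
      = 2 * (a + b) ∧
    ∀ z, z ∉ ((matchGraph η (idPM n)).connectedComponentMk x).supp
          ∪ ((matchGraph η (idPM n)).connectedComponentMk y).supp →
      ((matchGraph η' (idPM n)).connectedComponentMk z).supp
        = ((matchGraph η (idPM n)).connectedComponentMk z).supp := by
  classical
  have hη'inv : ∀ u, η'.1 (η'.1 u) = u := η'.2.1
  have hη'ne : ∀ u, η'.1 u ≠ u := η'.2.2
  have hηinv : ∀ u, η.1 (η.1 u) = u := η.2.1
  have hηne : ∀ u, η.1 u ≠ u := η.2.2
  have hS : ∀ z, z ∈ swapSet η x y ↔ z = x ∨ z = η.1 x ∨ z = y ∨ z = η.1 y := by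
    intro z; simp [swapSet]
  have hxex : (matchGraph η (idPM n)).Reachable x (η.1 x) := (adj_fst η (idPM n) x).reachable
  have hyey : (matchGraph η (idPM n)).Reachable y (η.1 y) := (adj_fst η (idPM n) y).reachable
  have hxy : x ≠ y := fun h => hreach (h ▸ SimpleGraph.Reachable.refl x)
  have hxey : x ≠ η.1 y := fun h => hreach (h ▸ hyey.symm)
  have hexy : η.1 x ≠ y := fun h => hreach (h ▸ hxex)
  have hexey : η.1 x ≠ η.1 y := fun h => hreach (hxex.trans (h ▸ hyey.symm))
  have hxS : x ∈ swapSet η x y := (hS x).mpr (Or.inl rfl)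
  have hexS : η.1 x ∈ swapSet η x y := (hS _).mpr (Or.inr (Or.inl rfl))
  have hyS : y ∈ swapSet η x y := (hS y).mpr (Or.inr (Or.inr (Or.inl rfl)))
  have heyS : η.1 y ∈ swapSet η x y := (hS _).mpr (Or.inr (Or.inr (Or.inr rfl)))
  -- η' pairs x with y or η y, and η x with the other
  have hη'x_cases : η'.1 x = y ∨ η'.1 x = η.1 y := by
    rcases (hS _).mp (hinv x hxS) with h | h | h | h
    · exact absurd h (hη'ne x)
    · exfalso; apply hne
      -- η' = η
      have hη'ex : η'.1 (η.1 x) = η.1 (η.1 x) := by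
        rw [hηinv, ← h, hη'inv]
      have hη'y : η'.1 y = η.1 y := by
        rcases (hS _).mp (hinv y hyS) with h2 | h2 | h2 | h2
        · exfalso
          have : η'.1 x = y := by rw [← h2, hη'inv]
          rw [h] at this; exact hexy this
        · exfalso
          have : y = x := η'.1.injective (by rw [h2, h])
          exact hxy this.symm
        · exact absurd h2 (hη'ne y)
        · exact h2
      apply Subtype.ext; apply Equiv.ext; intro z
      by_cases hz : z ∈ swapSet η x y
      · rcases (hS z).mp hz with rfl | rfl | rfl | rfl
        · exact h
        · exact hη'ex
        · exact hη'y
        · rw [show η.1 (η.1 y) = y from hηinv y, ← hη'y, hη'inv]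
      · exact hoff z hz
    · exact Or.inl h
    · exact Or.inr h
  have hpair : (η'.1 x = y ∧ η'.1 (η.1 x) = η.1 y) ∨ (η'.1 x = η.1 y ∧ η'.1 (η.1 x) = y) := by
    have hmem := (hS _).mp (hinv (η.1 x) hexS)
    have hη'exx : η'.1 (η.1 x) ≠ x := by
      intro h
      have : η.1 x = η'.1 x := by rw [← hη'inv (η.1 x), h]
      rcases hη'x_cases with h2 | h2
      · rw [h2] at this; exact hexy this
      · rw [h2] at this; exact hexey this
    rcases hη'x_cases with h | h
    · left; refine ⟨h, ?_⟩
      rcases hmem with h2 | h2 | h2 | h2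
      · exact absurd h2 hη'exx
      · exact absurd h2 (hη'ne _)
      · exfalso
        have : η.1 x = x := η'.1.injective (by rw [h2, h])
        exact hηne x this
      · exact h2
    · right; refine ⟨h, ?_⟩
      rcases hmem with h2 | h2 | h2 | h2
      · exact absurd h2 hη'exx
      · exact absurd h2 (hη'ne _)
      · exact h2
      · exfalso
        have : η.1 x = x := η'.1.injective (by rw [h2, h])
        exact hηne x this
  have mem_supp : ∀ (H : SimpleGraph (Fin n × Bool)) (z u : Fin n × Bool),
      u ∈ (H.connectedComponentMk z).supp ↔ H.Reachable u z := by
    intro H z u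
    rw [SimpleGraph.ConnectedComponent.mem_supp_iff, SimpleGraph.ConnectedComponent.eq]
  -- KEY PARITY LEMMA
  have key : (matchGraph η' (idPM n)).Reachable x (η.1 x) := by
    by_contra hkey
    have hmemE : ∀ u, u ∈ (Finset.univ.filter (fun u => (matchGraph η' (idPM n)).Reachable x u ∧
        (matchGraph η (idPM n)).Reachable x u)) ↔
        (matchGraph η' (idPM n)).Reachable x u ∧ (matchGraph η (idPM n)).Reachable x u := by
      intro u; simp
    set E := (Finset.univ.filter (fun u => (matchGraph η' (idPM n)).Reachable x u ∧
        (matchGraph η (idPM n)).Reachable x u)) with hE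
    have hxE : x ∈ E := (hmemE x).mpr ⟨SimpleGraph.Reachable.refl x, SimpleGraph.Reachable.refl x⟩
    have hidE : ∀ u ∈ E, (idPM n).1 u ∈ E := by
      intro u hu
      rcases (hmemE u).mp hu with ⟨h1, h2⟩
      exact (hmemE _).mpr ⟨h1.trans (adj_snd η' (idPM n) u).reachable,
        h2.trans (adj_snd η (idPM n) u).reachable⟩
    have heven : Even E.card :=
      even_card_invol _ E hidE (fun u _ => (idPM n).2.1 u) (fun u _ => (idPM n).2.2 u)
    have hηF : ∀ u ∈ E.erase x, η.1 u ∈ E.erase x := by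
      intro u hu
      obtain ⟨hux, huE⟩ := Finset.mem_erase.mp hu
      rcases (hmemE u).mp huE with ⟨h1, h2⟩
      have huex : u ≠ η.1 x := fun h => hkey (h ▸ h1)
      have huy : u ≠ y := fun h => hreach (h ▸ h2)
      have huey : u ≠ η.1 y := fun h => hreach ((h ▸ h2).trans hyey.symm)
      have hnotS : u ∉ swapSet η x y := by
        intro hmem
        rcases (hS u).mp hmem with h | h | h | h
        · exact hux h
        · exact huex h
        · exact huy h
        · exact huey h
      have hηη' : η'.1 u = η.1 u := hoff u hnotS
      have r1 : (matchGraph η' (idPM n)).Reachable x (η.1 u) :=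
        h1.trans (by rw [← hηη']; exact (adj_fst η' (idPM n) u).reachable)
      have r2 : (matchGraph η (idPM n)).Reachable x (η.1 u) :=
        h2.trans (adj_fst η (idPM n) u).reachable
      have hηux : η.1 u ≠ x := by
        intro h
        exact huex (by rw [← hηinv u, h])
      exact Finset.mem_erase.mpr ⟨hηux, (hmemE _).mpr ⟨r1, r2⟩⟩
    have hevenF : Even (E.erase x).card :=
      even_card_invol _ _ hηF (fun u _ => hηinv u) (fun u _ => hηne u)
    have hcard : (E.erase x).card = E.card - 1 := Finset.card_erase_of_mem hxE
    have hpos : 0 < E.card := Finset.card_pos.mpr ⟨x, hxE⟩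
    obtain ⟨p, hp⟩ := heven
    obtain ⟨q, hq⟩ := hevenF
    omega
  -- x reaches y and η y in the new graph
  have hry : (matchGraph η' (idPM n)).Reachable x y ∧ (matchGraph η' (idPM n)).Reachable x (η.1 y) := by
    have r1 : (matchGraph η' (idPM n)).Reachable x (η'.1 x) := (adj_fst η' (idPM n) x).reachable
    have r2 : (matchGraph η' (idPM n)).Reachable x (η'.1 (η.1 x)) :=
      key.trans (adj_fst η' (idPM n) (η.1 x)).reachable
    rcases hpair with ⟨h1, h2⟩ | ⟨h1, h2⟩
    · exact ⟨h1 ▸ r1, h2 ▸ r2⟩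
    · exact ⟨h2 ▸ r2, h1 ▸ r1⟩
  have hSsubP : ∀ z ∈ swapSet η x y, (matchGraph η' (idPM n)).Reachable x z := by
    intro z hz
    rcases (hS z).mp hz with rfl | rfl | rfl | rfl
    · exact SimpleGraph.Reachable.refl _
    · exact key
    · exact hry.1
    · exact hry.2
  -- the set of η'-reachable points is closed under η-adjacency
  have hPclosed : ∀ a b, (matchGraph η (idPM n)).Adj a b →
      a ∈ {u | (matchGraph η' (idPM n)).Reachable x u} →
      b ∈ {u | (matchGraph η' (idPM n)).Reachable x u} := by
    intro a b hab ha
    rcases adj_cases hab with rfl | rfl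
    · by_cases haS : a ∈ swapSet η x y
      · have hmem : η.1 a ∈ swapSet η x y := by
          rcases (hS a).mp haS with rfl | h | rfl | h
          · exact hexS
          · rw [h, hηinv]; exact hxS
          · exact heyS
          · rw [h, hηinv]; exact hyS
        exact hSsubP _ hmem
      · rw [← hoff a haS]
        exact ha.trans (adj_fst η' (idPM n) a).reachable
    · exact ha.trans (adj_snd η' (idPM n) a).reachable
  have htransferX : ∀ u, (matchGraph η (idPM n)).Reachable x u →
      (matchGraph η' (idPM n)).Reachable x u :=
    fun u hu => reach_closed hPclosed hu (SimpleGraph.Reachable.refl x)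
  have htransferY : ∀ u, (matchGraph η (idPM n)).Reachable y u →
      (matchGraph η' (idPM n)).Reachable x u :=
    fun u hu => reach_closed hPclosed hu hry.1
  -- U := Cx ∪ Cy closure properties
  have hS_subU : ∀ z ∈ swapSet η x y,
      z ∈ ((matchGraph η (idPM n)).connectedComponentMk x).supp
        ∪ ((matchGraph η (idPM n)).connectedComponentMk y).supp := by
    intro z hz
    rcases (hS z).mp hz with rfl | rfl | rfl | rfl
    · exact Or.inl ((mem_supp _ _ _).mpr (SimpleGraph.Reachable.refl _))
    · exact Or.inl ((mem_supp _ _ _).mpr hxex.symm)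
    · exact Or.inr ((mem_supp _ _ _).mpr (SimpleGraph.Reachable.refl _))
    · exact Or.inr ((mem_supp _ _ _).mpr hyey.symm)
  have hUclosedG : ∀ a b, (matchGraph η (idPM n)).Adj a b →
      a ∈ ((matchGraph η (idPM n)).connectedComponentMk x).supp
        ∪ ((matchGraph η (idPM n)).connectedComponentMk y).supp →
      b ∈ ((matchGraph η (idPM n)).connectedComponentMk x).supp
        ∪ ((matchGraph η (idPM n)).connectedComponentMk y).supp := by
    intro a b hab ha
    rcases ha with ha | ha
    · exact Or.inl ((mem_supp _ _ _).mpr (hab.symm.reachable.trans ((mem_supp _ _ _).mp ha)))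
    · exact Or.inr ((mem_supp _ _ _).mpr (hab.symm.reachable.trans ((mem_supp _ _ _).mp ha)))
  have hUclosedG' : ∀ a b, (matchGraph η' (idPM n)).Adj a b →
      a ∈ ((matchGraph η (idPM n)).connectedComponentMk x).supp
        ∪ ((matchGraph η (idPM n)).connectedComponentMk y).supp →
      b ∈ ((matchGraph η (idPM n)).connectedComponentMk x).supp
        ∪ ((matchGraph η (idPM n)).connectedComponentMk y).supp := by
    intro a b hab ha
    rcases adj_cases hab with rfl | rfl
    · by_cases haS : a ∈ swapSet η x y
      · exact hS_subU _ (hinv a haS)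
      · rw [hoff a haS]
        exact hUclosedG a _ (adj_fst η (idPM n) a) ha
    · exact hUclosedG a _ (adj_snd η (idPM n) a) ha
  -- CLAIM 1
  have claim1 : ((matchGraph η' (idPM n)).connectedComponentMk x).supp
      = ((matchGraph η (idPM n)).connectedComponentMk x).supp
        ∪ ((matchGraph η (idPM n)).connectedComponentMk y).supp := by
    ext u
    constructor
    · intro hu
      exact reach_closed hUclosedG' ((mem_supp _ _ _).mp hu).symm (hS_subU x hxS)
    · intro hu
      rcases hu with hu | hu
      · exact (mem_supp _ _ _).mpr (htransferX u ((mem_supp _ _ _).mp hu).symm).symm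
      · exact (mem_supp _ _ _).mpr (htransferY u ((mem_supp _ _ _).mp hu).symm).symm
  refine ⟨claim1, ?_, ?_⟩
  · -- CLAIM 2
    have hdisj : Disjoint ((matchGraph η (idPM n)).connectedComponentMk x).supp
        ((matchGraph η (idPM n)).connectedComponentMk y).supp := by
      rw [Set.disjoint_left]
      intro u hux huy
      exact hreach (((mem_supp _ _ _).mp hux).symm.trans ((mem_supp _ _ _).mp huy))
    rw [Nat.card_coe_set_eq, Set.ncard_union_eq hdisj (Set.toFinite _) (Set.toFinite _),
      ← Nat.card_coe_set_eq, ← Nat.card_coe_set_eq, ha, hb]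
    ring
  · -- CLAIM 3
    intro z hz
    have h1 : ∀ u, (matchGraph η (idPM n)).Reachable z u →
        u ∈ {u | u ∉ ((matchGraph η (idPM n)).connectedComponentMk x).supp
            ∪ ((matchGraph η (idPM n)).connectedComponentMk y).supp ∧
          (matchGraph η' (idPM n)).Reachable z u} := by
      intro u hu
      refine reach_closed ?_ hu ⟨hz, SimpleGraph.Reachable.refl z⟩
      rintro a b hab ⟨haU, har⟩
      have hbU : b ∉ _ := fun hbU => haU (hUclosedG b a hab.symm hbU)
      have haS : a ∉ swapSet η x y := fun h => haU (hS_subU a h)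
      rcases adj_cases hab with rfl | rfl
      · exact ⟨hbU, har.trans (by rw [← hoff a haS]; exact (adj_fst η' (idPM n) a).reachable)⟩
      · exact ⟨hbU, har.trans (adj_snd η' (idPM n) a).reachable⟩
    have h2 : ∀ u, (matchGraph η' (idPM n)).Reachable z u →
        u ∈ {u | u ∉ ((matchGraph η (idPM n)).connectedComponentMk x).supp
            ∪ ((matchGraph η (idPM n)).connectedComponentMk y).supp ∧
          (matchGraph η (idPM n)).Reachable z u} := by
      intro u hu
      refine reach_closed ?_ hu ⟨hz, SimpleGraph.Reachable.refl z⟩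
      rintro a b hab ⟨haU, har⟩
      have haS : a ∉ swapSet η x y := fun h => haU (hS_subU a h)
      have hab2 : (matchGraph η (idPM n)).Adj a b := by
        rcases adj_cases hab with rfl | rfl
        · rw [hoff a haS]; exact adj_fst η (idPM n) a
        · exact adj_snd η (idPM n) a
      have hbU : b ∉ _ := fun hbU => haU (hUclosedG b a hab2.symm hbU)
      exact ⟨hbU, har.trans hab2.reachable⟩
    ext u
    rw [mem_supp, mem_supp]
    constructor
    · intro hu
      exact ((h2 u hu.symm).2).symm
    · intro hu
      exact ((h1 u hu.symm).2).symm


end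
end

section
/- Let η ∈ M_n and let p, q be two distinct pairs of η whose elements lie in the same connected component, a cycle of length 2m with m ≥ 2, of the multigraph ({1,…,2n}, η ⊎ id_n). Among the two n-PMs η' ≠ η that agree with η outside p ∪ q and match the four elements of p ∪ q differently, exactly one has that component replaced by a single cycle of length 2m on the same vertex set, while for the other the component splits into two cycles of lengths 2m₁ and 2m₂ with m₁ + m₂ = m and m₁, m₂ ≥ 1. In both cases all other components are unchanged. -/
open scoped Classical

noncomputable section

namespace SwapAux

variable {n : ℕ}

/-- A set closed under adjacency absorbs reachability. -/
lemma mem_of_walk {V : Type*} {G : SimpleGraph V} {S : Set V}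
    (hS : ∀ a ∈ S, ∀ b, G.Adj a b → b ∈ S) {x z : V} (w : G.Walk x z) :
    x ∈ S → z ∈ S := by
  induction w with
  | nil => exact id
  | cons h p ih => intro hx; exact ih (hS _ hx _ h)

lemma supp_subset_of_closed {V : Type*} {G : SimpleGraph V} {S : Set V}
    (hS : ∀ a ∈ S, ∀ b, G.Adj a b → b ∈ S) {x : V} (hx : x ∈ S) :
    (G.connectedComponentMk x).supp ⊆ S := by
  intro z hz
  rw [SimpleGraph.ConnectedComponent.mem_supp_iff] at hz
  exact mem_of_walk hS (SimpleGraph.ConnectedComponent.eq.mp hz).symm.some hx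

lemma matchGraph_closed {η μ : PM n} {S : Set (Fin n × Bool)}
    (hη : ∀ a ∈ S, η.1 a ∈ S) (hμ : ∀ a ∈ S, μ.1 a ∈ S) :
    ∀ a ∈ S, ∀ b, (matchGraph η μ).Adj a b → b ∈ S := by
  rintro a ha b ⟨-, h | h⟩ <;> subst h
  · exact hη a ha
  · exact hμ a ha

lemma adj_eta (η μ : PM n) (a : Fin n × Bool) : (matchGraph η μ).Adj a (η.1 a) :=
  ⟨(η.2.2 a).symm, Or.inl rfl⟩

lemma adj_mu (η μ : PM n) (a : Fin n × Bool) : (matchGraph η μ).Adj a (μ.1 a) :=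
  ⟨(μ.2.2 a).symm, Or.inr rfl⟩

/-! ### the orbit structure of a component -/

/-- the step map along the cycle: `μ`-edge then `η`-edge. -/
def ff (η μ : PM n) : Fin n × Bool → Fin n × Bool := fun v => η.1 (μ.1 v)

/-- the inverse step map. -/
def gg (η μ : PM n) : Fin n × Bool → Fin n × Bool := fun v => μ.1 (η.1 v)

lemma gg_ff (η μ : PM n) (v : Fin n × Bool) : gg η μ (ff η μ v) = v := by
  simp [ff, gg, η.2.1 _, μ.2.1 _]

lemma ff_gg (η μ : PM n) (v : Fin n × Bool) : ff η μ (gg η μ v) = v := by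
  simp [ff, gg, η.2.1 _, μ.2.1 _]

lemma eta_ff (η μ : PM n) (v : Fin n × Bool) : η.1 (ff η μ v) = μ.1 v := η.2.1 _

lemma mu_ff (η μ : PM n) (v : Fin n × Bool) : μ.1 (ff η μ v) = gg η μ (μ.1 v) := by
  simp [ff, gg, μ.2.1 _]

lemma gg_iter_ff_iter (η μ : PM n) (k : ℕ) (v : Fin n × Bool) :
    (gg η μ)^[k] ((ff η μ)^[k] v) = v := by
  induction k with
  | zero => rfl
  | succ k ih =>
      rw [Function.iterate_succ_apply' (ff η μ), Function.iterate_succ_apply (gg η μ),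
        gg_ff, ih]

lemma mu_ff_iter (η μ : PM n) (k : ℕ) (v : Fin n × Bool) :
    μ.1 ((ff η μ)^[k] v) = (gg η μ)^[k] (μ.1 v) := by
  induction k with
  | zero => rfl
  | succ k ih =>
      rw [Function.iterate_succ_apply' (ff η μ), Function.iterate_succ_apply' (gg η μ),
        mu_ff, ih]

/-- the period of `x` under the step map. -/
def dd (η μ : PM n) (x : Fin n × Bool) : ℕ := Function.minimalPeriod (ff η μ) x

lemma ff_eq_perm (η μ : PM n) : ff η μ = ⇑(μ.1.trans η.1) := rfl

lemma isPeriodic (η μ : PM n) (x : Fin n × Bool) :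
    Function.IsPeriodicPt (ff η μ) (orderOf (μ.1.trans η.1)) x := by
  show (ff η μ)^[_] x = x
  rw [ff_eq_perm, Equiv.Perm.iterate_eq_pow, pow_orderOf_eq_one]
  rfl

lemma dd_pos (η μ : PM n) (x : Fin n × Bool) : 0 < dd η μ x :=
  (isPeriodic η μ x).minimalPeriod_pos (orderOf_pos _)

lemma iter_dd (η μ : PM n) (x : Fin n × Bool) : (ff η μ)^[dd η μ x] x = x :=
  Function.iterate_minimalPeriod

lemma eta_iter (η μ : PM n) (k : ℕ) (x : Fin n × Bool) :
    η.1 ((ff η μ)^[k + 1] x) = μ.1 ((ff η μ)^[k] x) := by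
  rw [Function.iterate_succ_apply', eta_ff]

lemma eta_iter' (η μ : PM n) (k : ℕ) (x : Fin n × Bool) :
    η.1 ((ff η μ)^[k] x) = μ.1 ((ff η μ)^[k + dd η μ x - 1] x) := by
  have hd := dd_pos η μ x
  have h1 : k + dd η μ x - 1 + 1 = k + dd η μ x := by omega
  have h2 : (ff η μ)^[k + dd η μ x] x = (ff η μ)^[k] x := by
    rw [Function.iterate_add_apply, iter_dd]
  rw [← eta_iter η μ (k + dd η μ x - 1) x, h1, h2]

/-- the forward orbit. -/
def OO (η μ : PM n) (x : Fin n × Bool) : Set (Fin n × Bool) :=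
  Set.range (fun k : ℕ => (ff η μ)^[k] x)

/-- the component: orbit together with its `μ`-image. -/
def UU (η μ : PM n) (x : Fin n × Bool) : Set (Fin n × Bool) :=
  OO η μ x ∪ μ.1 '' OO η μ x

lemma OO_eq_image (η μ : PM n) (x : Fin n × Bool) :
    OO η μ x = (fun k : ℕ => (ff η μ)^[k] x) '' Set.Iio (dd η μ x) := by
  apply Set.Subset.antisymm
  · rintro v ⟨k, rfl⟩
    exact ⟨k % dd η μ x, Nat.mod_lt _ (dd_pos η μ x),
      Function.iterate_mod_minimalPeriod_eq⟩
  · rintro v ⟨k, -, rfl⟩; exact ⟨k, rfl⟩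

lemma ncard_OO (η μ : PM n) (x : Fin n × Bool) : (OO η μ x).ncard = dd η μ x := by
  rw [OO_eq_image]
  unfold dd
  rw [Set.ncard_image_of_injOn Function.iterate_injOn_Iio_minimalPeriod,
    ← Finset.coe_range, Set.ncard_coe_finset, Finset.card_range]

lemma x_mem_OO (η μ : PM n) (x : Fin n × Bool) : x ∈ OO η μ x := ⟨0, rfl⟩

lemma UU_closed_mu (η μ : PM n) (x : Fin n × Bool) :
    ∀ v ∈ UU η μ x, μ.1 v ∈ UU η μ x := by
  rintro v (⟨k, rfl⟩ | ⟨w, ⟨k, rfl⟩, rfl⟩)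
  · exact Or.inr ⟨_, ⟨k, rfl⟩, rfl⟩
  · exact Or.inl (by rw [μ.2.1 _]; exact ⟨k, rfl⟩)

lemma UU_closed_eta (η μ : PM n) (x : Fin n × Bool) :
    ∀ v ∈ UU η μ x, η.1 v ∈ UU η μ x := by
  rintro v (⟨k, rfl⟩ | ⟨w, ⟨k, rfl⟩, rfl⟩)
  · rw [eta_iter' η μ k x]; exact Or.inr ⟨_, ⟨_, rfl⟩, rfl⟩
  · show η.1 (μ.1 _) ∈ _
    exact Or.inl ⟨k + 1, Function.iterate_succ_apply' (ff η μ) k x⟩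

lemma reach_iter (η μ : PM n) (x : Fin n × Bool) (k : ℕ) :
    (matchGraph η μ).Reachable x ((ff η μ)^[k] x) := by
  induction k with
  | zero => exact SimpleGraph.Reachable.refl x
  | succ k ih =>
      refine ih.trans ((adj_mu η μ _).reachable.trans ?_)
      rw [Function.iterate_succ_apply']
      exact (adj_eta η μ (μ.1 ((ff η μ)^[k] x))).reachable

lemma reach_UU (η μ : PM n) (x : Fin n × Bool) :
    ∀ v ∈ UU η μ x, (matchGraph η μ).Reachable x v := by
  rintro v (⟨k, rfl⟩ | ⟨w, ⟨k, rfl⟩, rfl⟩)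
  · exact reach_iter η μ x k
  · exact (reach_iter η μ x k).trans (adj_mu η μ _).reachable

lemma supp_eq_UU (η μ : PM n) (x : Fin n × Bool) :
    ((matchGraph η μ).connectedComponentMk x).supp = UU η μ x := by
  apply Set.Subset.antisymm
  · exact supp_subset_of_closed
      (matchGraph_closed (UU_closed_eta η μ x) (UU_closed_mu η μ x))
      (Or.inl (x_mem_OO η μ x))
  · intro v hv
    rw [SimpleGraph.ConnectedComponent.mem_supp_iff]
    exact SimpleGraph.ConnectedComponent.eq.mpr (reach_UU η μ x v hv).symm

end SwapAux

namespace SwapAux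

variable {n : ℕ}

lemma iter_modeq (η μ : PM n) (x : Fin n × Bool) {u v : ℕ}
    (h : u % dd η μ x = v % dd η μ x) : (ff η μ)^[u] x = (ff η μ)^[v] x := by
  have h1 : (ff η μ)^[u % dd η μ x] x = (ff η μ)^[u] x :=
    Function.iterate_mod_minimalPeriod_eq
  have h2 : (ff η μ)^[v % dd η μ x] x = (ff η μ)^[v] x :=
    Function.iterate_mod_minimalPeriod_eq
  rw [← h1, ← h2, h]

lemma disj_OO (η μ : PM n) (x : Fin n × Bool) :
    Disjoint (OO η μ x) (μ.1 '' OO η μ x) := by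
  rw [Set.disjoint_left]
  rintro v ⟨a, rfl⟩ ⟨w, ⟨b, rfl⟩, hw⟩
  -- `(ff)^[a] x = μ ((ff)^[b] x)`
  set f := ff η μ with hf
  set d := dd η μ x with hd
  have hdpos : 0 < d := dd_pos η μ x
  -- key: `μ (f^[b+s] x) = (gg η μ)^[s] (f^[a] x)`
  have key : ∀ s : ℕ, μ.1 (f^[b + s] x) = (gg η μ)^[s] (f^[a] x) := by
    intro s
    rw [add_comm b s, Function.iterate_add_apply, mu_ff_iter, hw]
  -- if `f^[b+2s] x = f^[a] x` then `μ` has a fixed point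
  have mufix : ∀ s : ℕ, f^[b + 2 * s] x = f^[a] x → False := by
    intro s hs
    apply μ.2.2 (f^[b + s] x)
    rw [key s, ← hs]
    have : b + 2 * s = s + (b + s) := by omega
    rw [this, Function.iterate_add_apply, gg_iter_ff_iter]
  -- if `f^[b+2s+1] x = f^[a] x` then `η` has a fixed point
  have etafix : ∀ s : ℕ, f^[b + 2 * s + 1] x = f^[a] x → False := by
    intro s hs
    apply η.2.2 (f^[b + s + 1] x)
    have h1 : η.1 (f^[b + s + 1] x) = μ.1 (f^[b + s] x) := eta_iter η μ _ x
    rw [h1, key s, ← hs]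
    have : b + 2 * s + 1 = s + (b + s + 1) := by omega
    rw [this, Function.iterate_add_apply, gg_iter_ff_iter]
  -- find a suitable `s`
  set D := (b + 1) * d with hD
  have hbD : b + 1 ≤ D := Nat.le_mul_of_pos_right _ hdpos
  set A := a + 2 * D with hA
  have hAa : f^[A] x = f^[a] x := by
    apply iter_modeq
    have : A = a + (2 * (b + 1)) * d := by rw [hA, hD]; ring
    rw [this]
    simp [hd, Nat.add_mul_mod_self_right]
  have hbA : b ≤ A := by omega
  set r := A - b with hr
  rcases Nat.even_or_odd r with ⟨s, hs⟩ | ⟨s, hs⟩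
  · exact mufix s (by rw [show b + 2 * s = A by omega, hAa])
  · rcases Nat.even_or_odd d with ⟨t, ht⟩ | ⟨t, ht⟩
    · -- d even, r odd : use the η-fixed-point branch
      exact etafix s (by rw [show b + 2 * s + 1 = A by omega, hAa])
    · -- d odd, r odd : `2*((s) + t + 1) = r + d`
      refine mufix (s + t + 1) ?_
      have : f^[b + 2 * (s + t + 1)] x = f^[A + d] x := by
        apply iter_modeq
        have : b + 2 * (s + t + 1) = A + d := by omega
        rw [this]
      rw [this, ← hAa]
      apply iter_modeq
      simp [hd, Nat.add_mod_right]
  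
lemma ncard_UU (η μ : PM n) (x : Fin n × Bool) :
    (UU η μ x).ncard = 2 * dd η μ x := by
  rw [UU, Set.ncard_union_eq (disj_OO η μ x) (Set.toFinite _) (Set.toFinite _),
    Set.ncard_image_of_injective _ μ.1.injective, ncard_OO]
  ring

lemma card_supp (η μ : PM n) (x : Fin n × Bool) :
    Nat.card ((matchGraph η μ).connectedComponentMk x).supp = 2 * dd η μ x := by
  rw [Nat.card_coe_set_eq, supp_eq_UU, ncard_UU]

end SwapAux

namespace SwapAux

variable {n : ℕ}

/-- conjugation of a perfect matching by a permutation. -/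
def conjPM (η : PM n) (s : Equiv.Perm (Fin n × Bool)) : PM n :=
  ⟨(s.symm.trans η.1).trans s, by
      intro v
      simp [Equiv.trans_apply, η.2.1 _],
    by
      intro v h
      simp only [Equiv.trans_apply] at h
      have := congrArg s.symm h
      rw [Equiv.symm_apply_apply] at this
      exact η.2.2 _ this⟩

lemma conjPM_apply (η : PM n) (s : Equiv.Perm (Fin n × Bool)) (v : Fin n × Bool) :
    (conjPM η s).1 v = s (η.1 (s.symm v)) := rfl

section four

variable (η : PM n) (x y : Fin n × Bool)

/-- the rematching pairing `{x,y}` and `{ηx, ηy}`. -/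
def pmA : PM n := conjPM η (Equiv.swap y (η.1 x))

/-- the rematching pairing `{x,ηy}` and `{ηx, y}`. -/
def pmB : PM n := conjPM η (Equiv.swap (η.1 y) (η.1 x))

variable {η x y}

lemma ne_facts (hxy : y ≠ x) (hyx : y ≠ η.1 x) : x ≠ η.1 x ∧ y ≠ η.1 y ∧ x ≠ η.1 y ∧ η.1 x ≠ η.1 y := by
  refine ⟨(η.2.2 x).symm, (η.2.2 y).symm, ?_, ?_⟩
  · intro h; exact hyx (by rw [h, η.2.1])
  · intro h; exact hxy (η.1.injective h).symm

lemma mem_swapSet_iff {v : Fin n × Bool} :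
    v ∈ swapSet η x y ↔ v = x ∨ v = η.1 x ∨ v = y ∨ v = η.1 y := by
  simp [swapSet]

lemma swapSet_symm : swapSet η x (η.1 y) = swapSet η x y := by
  ext v
  simp only [swapSet, Finset.mem_insert, Finset.mem_singleton, η.2.1 y]
  tauto

lemma pmA_x (hxy : y ≠ x) (hyx : y ≠ η.1 x) : (pmA η x y).1 x = y := by
  obtain ⟨h1, h2, h3, h4⟩ := ne_facts (η := η) hxy hyx
  rw [pmA, conjPM_apply, Equiv.symm_swap, Equiv.swap_apply_of_ne_of_ne hxy.symm h1,
    Equiv.swap_apply_right]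

lemma pmA_ex (hxy : y ≠ x) (hyx : y ≠ η.1 x) : (pmA η x y).1 (η.1 x) = η.1 y := by
  obtain ⟨h1, h2, h3, h4⟩ := ne_facts (η := η) hxy hyx
  rw [pmA, conjPM_apply, Equiv.symm_swap, Equiv.swap_apply_right,
    Equiv.swap_apply_of_ne_of_ne h2.symm h4.symm]

lemma pmA_y (hxy : y ≠ x) (hyx : y ≠ η.1 x) : (pmA η x y).1 y = x := by
  obtain ⟨h1, h2, h3, h4⟩ := ne_facts (η := η) hxy hyx
  rw [pmA, conjPM_apply, Equiv.symm_swap, Equiv.swap_apply_left, η.2.1,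
    Equiv.swap_apply_of_ne_of_ne hxy.symm h1]

lemma pmA_ey (hxy : y ≠ x) (hyx : y ≠ η.1 x) : (pmA η x y).1 (η.1 y) = η.1 x := by
  obtain ⟨h1, h2, h3, h4⟩ := ne_facts (η := η) hxy hyx
  rw [pmA, conjPM_apply, Equiv.symm_swap, Equiv.swap_apply_of_ne_of_ne h2.symm h4.symm,
    η.2.1, Equiv.swap_apply_left]

lemma pmA_out (hxy : y ≠ x) (hyx : y ≠ η.1 x) {v : Fin n × Bool} (hv : v ∉ swapSet η x y) :
    (pmA η x y).1 v = η.1 v := by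
  rw [mem_swapSet_iff] at hv
  push_neg at hv
  obtain ⟨e1, e2, e3, e4⟩ := hv
  rw [pmA, conjPM_apply, Equiv.symm_swap, Equiv.swap_apply_of_ne_of_ne e3 e2,
    Equiv.swap_apply_of_ne_of_ne (fun h => e4 (by rw [← h, η.2.1]))
      (fun h => e1 (η.1.injective h))]

lemma pmB_x (hxy : y ≠ x) (hyx : y ≠ η.1 x) : (pmB η x y).1 x = η.1 y := by
  obtain ⟨h1, h2, h3, h4⟩ := ne_facts (η := η) hxy hyx
  rw [pmB, conjPM_apply, Equiv.symm_swap, Equiv.swap_apply_of_ne_of_ne h3 h1,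
    Equiv.swap_apply_right]

lemma pmB_ex (hxy : y ≠ x) (hyx : y ≠ η.1 x) : (pmB η x y).1 (η.1 x) = y := by
  obtain ⟨h1, h2, h3, h4⟩ := ne_facts (η := η) hxy hyx
  rw [pmB, conjPM_apply, Equiv.symm_swap, Equiv.swap_apply_right, η.2.1,
    Equiv.swap_apply_of_ne_of_ne h2 hyx]

lemma pmB_y (hxy : y ≠ x) (hyx : y ≠ η.1 x) : (pmB η x y).1 y = η.1 x := by
  obtain ⟨h1, h2, h3, h4⟩ := ne_facts (η := η) hxy hyx
  rw [pmB, conjPM_apply, Equiv.symm_swap, Equiv.swap_apply_of_ne_of_ne h2 hyx,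
    Equiv.swap_apply_left]

lemma pmB_ey (hxy : y ≠ x) (hyx : y ≠ η.1 x) : (pmB η x y).1 (η.1 y) = x := by
  obtain ⟨h1, h2, h3, h4⟩ := ne_facts (η := η) hxy hyx
  rw [pmB, conjPM_apply, Equiv.symm_swap, Equiv.swap_apply_left, η.2.1,
    Equiv.swap_apply_of_ne_of_ne h3 h1]

lemma pmB_out (hxy : y ≠ x) (hyx : y ≠ η.1 x) {v : Fin n × Bool} (hv : v ∉ swapSet η x y) :
    (pmB η x y).1 v = η.1 v := by
  rw [mem_swapSet_iff] at hv
  push_neg at hv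
  obtain ⟨e1, e2, e3, e4⟩ := hv
  rw [pmB, conjPM_apply, Equiv.symm_swap, Equiv.swap_apply_of_ne_of_ne e4 e2,
    Equiv.swap_apply_of_ne_of_ne (fun h => e3 (η.1.injective h))
      (fun h => e1 (η.1.injective h))]

lemma eta_maps (hxy : y ≠ x) (hyx : y ≠ η.1 x) : ∀ z ∈ swapSet η x y, η.1 z ∈ swapSet η x y := by
  intro z hz
  rw [mem_swapSet_iff] at hz ⊢
  rcases hz with rfl | rfl | rfl | rfl
  · tauto
  · rw [η.2.1]; tauto
  · tauto
  · rw [η.2.1]; tauto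

lemma pmA_maps (hxy : y ≠ x) (hyx : y ≠ η.1 x) : ∀ z ∈ swapSet η x y, (pmA η x y).1 z ∈ swapSet η x y := by
  intro z hz
  rw [mem_swapSet_iff] at hz ⊢
  rcases hz with rfl | rfl | rfl | rfl
  · rw [pmA_x hxy hyx]; tauto
  · rw [pmA_ex hxy hyx]; tauto
  · rw [pmA_y hxy hyx]; tauto
  · rw [pmA_ey hxy hyx]; tauto

lemma pmB_maps (hxy : y ≠ x) (hyx : y ≠ η.1 x) : ∀ z ∈ swapSet η x y, (pmB η x y).1 z ∈ swapSet η x y := by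
  intro z hz
  rw [mem_swapSet_iff] at hz ⊢
  rcases hz with rfl | rfl | rfl | rfl
  · rw [pmB_x hxy hyx]; tauto
  · rw [pmB_ex hxy hyx]; tauto
  · rw [pmB_y hxy hyx]; tauto
  · rw [pmB_ey hxy hyx]; tauto

lemma card_swapSet (hxy : y ≠ x) (hyx : y ≠ η.1 x) : (swapSet η x y).card = 4 := by
  obtain ⟨h1, h2, h3, h4⟩ := ne_facts (η := η) hxy hyx
  rw [swapSet]
  rw [Finset.card_insert_of_notMem (by simp [h1, hxy.symm, h3]),
    Finset.card_insert_of_notMem (by simp [hyx.symm, h4]),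
    Finset.card_insert_of_notMem (by simp [h2]),
    Finset.card_singleton]

/-- a compatible matching is determined by the image of `x`. -/
lemma pm_determined (hxy : y ≠ x) (hyx : y ≠ η.1 x) (η' η'' : PM n)
    (h1 : ∀ z ∉ swapSet η x y, η'.1 z = η.1 z)
    (h2 : ∀ z ∈ swapSet η x y, η'.1 z ∈ swapSet η x y)
    (g1 : ∀ z ∉ swapSet η x y, η''.1 z = η.1 z)
    (g2 : ∀ z ∈ swapSet η x y, η''.1 z ∈ swapSet η x y)
    (hx : η'.1 x = η''.1 x) : η' = η'' := by
  have hxmem : x ∈ swapSet η x y := by rw [mem_swapSet_iff]; tauto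
  apply Subtype.ext
  apply Equiv.ext
  intro v
  by_cases hv : v ∈ swapSet η x y
  swap
  · rw [h1 v hv, g1 v hv]
  rcases eq_or_ne v x with rfl | hvx
  · exact hx
  rcases eq_or_ne v (η'.1 x) with rfl | hvw
  · show η'.1 (η'.1 x) = η''.1 (η'.1 x)
    rw [η'.2.1 x, hx, η''.2.1 x]
  · -- v is one of the remaining two elements
    have hw : η'.1 x ∈ swapSet η x y := h2 x hxmem
    have hwx : η'.1 x ≠ x := η'.2.2 x
    -- η' v and η'' v both lie in the singleton swapSet \ {v, x, η'.1 x}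
    have key : ∀ π : PM n, (∀ z ∈ swapSet η x y, π.1 z ∈ swapSet η x y) →
        π.1 x = η'.1 x →
        π.1 v ∈ (swapSet η x y \ {v, x, η'.1 x} : Finset _) := by
      intro π hπ hπx
      rw [Finset.mem_sdiff]
      refine ⟨hπ v hv, ?_⟩
      simp only [Finset.mem_insert, Finset.mem_singleton]
      push_neg
      refine ⟨(π.2.2 v), fun h => ?_, fun h => ?_⟩
      · -- π v = x implies v = π x = η' x
        apply hvw
        rw [← hπx, ← h, π.2.1]
      · -- π v = π x implies v = x
        exact hvx (π.1.injective (h.trans hπx.symm))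
    have c1 := key η' h2 rfl
    have c2 := key η'' g2 hx.symm
    have hcard : (swapSet η x y \ {v, x, η'.1 x} : Finset _).card = 1 := by
      rw [Finset.card_sdiff_of_subset]
      · rw [card_swapSet hxy hyx]
        rw [Finset.card_insert_of_notMem (by simp [hvx, hvw]),
          Finset.card_insert_of_notMem (by simp [hwx.symm]),
          Finset.card_singleton]
      · intro z hz
        simp only [Finset.mem_insert, Finset.mem_singleton] at hz
        rcases hz with rfl | rfl | rfl
        · exact hv
        · exact hxmem
        · exact hw
    obtain ⟨u, hu⟩ := Finset.card_eq_one.mp hcard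
    rw [hu, Finset.mem_singleton] at c1 c2
    rw [c1, c2]

end four

end SwapAux

namespace SwapAux

variable {n : ℕ} {η : PM n} {x y : Fin n × Bool}

lemma pmA_ne_eta (hxy : y ≠ x) (hyx : y ≠ η.1 x) : pmA η x y ≠ η := by
  intro h
  exact hyx (by rw [← pmA_x hxy hyx, h])

lemma pmB_ne_eta (hxy : y ≠ x) (hyx : y ≠ η.1 x) : pmB η x y ≠ η := by
  intro h
  obtain ⟨h1, h2, h3, h4⟩ := ne_facts hxy hyx
  exact h4 (by rw [← pmB_x hxy hyx, h])

lemma pmA_ne_pmB (hxy : y ≠ x) (hyx : y ≠ η.1 x) : pmA η x y ≠ pmB η x y := by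
  intro h
  obtain ⟨h1, h2, h3, h4⟩ := ne_facts hxy hyx
  have hh : (pmA η x y).1 x = (pmB η x y).1 x := by rw [h]
  rw [pmA_x hxy hyx, pmB_x hxy hyx] at hh
  exact h2 hh

/-- exactly two matchings are compatible with a swap at `{x,ηx,y,ηy}`. -/
lemma compat_iff (hxy : y ≠ x) (hyx : y ≠ η.1 x) (η' : PM n) :
    (η' ≠ η ∧ (∀ z, z ∉ swapSet η x y → η'.1 z = η.1 z) ∧
        ∀ z ∈ swapSet η x y, η'.1 z ∈ swapSet η x y)
      ↔ (η' = pmA η x y ∨ η' = pmB η x y) := by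
  obtain ⟨h1, h2, h3, h4⟩ := ne_facts hxy hyx
  have hxmem : x ∈ swapSet η x y := by rw [mem_swapSet_iff]; tauto
  constructor
  · rintro ⟨hne, hout, hin⟩
    have hx' : η'.1 x ∈ swapSet η x y := hin x hxmem
    rw [mem_swapSet_iff] at hx'
    rcases hx' with h | h | h | h
    · exact absurd h (η'.2.2 x)
    · exact absurd
        (pm_determined hxy hyx η' η hout hin (fun z _ => rfl) (eta_maps hxy hyx) h) hne
    · exact Or.inl (pm_determined hxy hyx η' (pmA η x y) hout hin
        (fun z hz => pmA_out hxy hyx hz) (pmA_maps hxy hyx) (by rw [h, pmA_x hxy hyx]))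
    · exact Or.inr (pm_determined hxy hyx η' (pmB η x y) hout hin
        (fun z hz => pmB_out hxy hyx hz) (pmB_maps hxy hyx) (by rw [h, pmB_x hxy hyx]))
  · rintro (rfl | rfl)
    · exact ⟨pmA_ne_eta hxy hyx, fun z hz => pmA_out hxy hyx hz, pmA_maps hxy hyx⟩
    · exact ⟨pmB_ne_eta hxy hyx, fun z hz => pmB_out hxy hyx hz, pmB_maps hxy hyx⟩

/-- components not touching the swap set are unchanged. -/
lemma supp_untouched (η η' μ : PM n) (x : Fin n × Bool)
    (hout : ∀ v, v ∉ (swapSet η x y : Set (Fin n × Bool)) → η'.1 v = η.1 v)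
    (hWsub : (swapSet η x y : Set (Fin n × Bool)) ⊆
      ((matchGraph η μ).connectedComponentMk x).supp)
    (z : Fin n × Bool) (hz : z ∉ ((matchGraph η μ).connectedComponentMk x).supp) :
    ((matchGraph η' μ).connectedComponentMk z).supp
      = ((matchGraph η μ).connectedComponentMk z).supp := by
  set Sx := ((matchGraph η μ).connectedComponentMk x).supp with hSx
  set Sz := ((matchGraph η μ).connectedComponentMk z).supp with hSz
  have hdisj : ∀ v ∈ Sz, v ∉ Sx := by
    intro v hv hvx
    apply hz
    rw [SimpleGraph.ConnectedComponent.mem_supp_iff] at hv hvx ⊢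
    rw [← hv, hvx]
  have hSzη : ∀ a ∈ Sz, η.1 a ∈ Sz := by
    rw [hSz, supp_eq_UU]; exact UU_closed_eta η μ z
  have hSzμ : ∀ a ∈ Sz, μ.1 a ∈ Sz := by
    rw [hSz, supp_eq_UU]; exact UU_closed_mu η μ z
  have step1 : ((matchGraph η' μ).connectedComponentMk z).supp ⊆ Sz := by
    apply supp_subset_of_closed
    · apply matchGraph_closed
      · intro a ha
        rw [hout a (fun hmem => hdisj a ha (hWsub hmem))]
        exact hSzη a ha
      · exact hSzμ
    · exact (SimpleGraph.ConnectedComponent.mem_supp_iff _ _).mpr rfl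
  apply Set.Subset.antisymm step1
  -- reverse inclusion
  set Tz := ((matchGraph η' μ).connectedComponentMk z).supp with hTz
  have hTη' : ∀ a ∈ Tz, η'.1 a ∈ Tz := by
    rw [hTz, supp_eq_UU]; exact UU_closed_eta η' μ z
  have hTμ : ∀ a ∈ Tz, μ.1 a ∈ Tz := by
    rw [hTz, supp_eq_UU]; exact UU_closed_mu η' μ z
  apply supp_subset_of_closed
  · apply matchGraph_closed
    · intro a ha
      rw [← hout a (fun hmem => hdisj a (step1 ha) (hWsub hmem))]
      exact hTη' a ha
    · exact hTμ
  · exact (SimpleGraph.ConnectedComponent.mem_supp_iff _ _).mpr rfl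

end SwapAux

namespace SwapAux

variable {n : ℕ}

lemma minPeriod_eq {α : Type*} (f : α → α) (x : α) (p : ℕ) (hp : 0 < p)
    (hfix : f^[p] x = x) (hne : ∀ k, 0 < k → k < p → f^[k] x ≠ x) :
    Function.minimalPeriod f x = p := by
  have hper : Function.IsPeriodicPt f p x := hfix
  have hle := hper.minimalPeriod_le hp
  have hpos := hper.minimalPeriod_pos hp
  rcases lt_or_eq_of_le hle with hlt | he
  · exact absurd Function.iterate_minimalPeriod (hne _ hpos hlt)
  · exact he

lemma supp_closed_eta (η μ : PM n) (x : Fin n × Bool) :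
    ∀ a ∈ ((matchGraph η μ).connectedComponentMk x).supp,
      η.1 a ∈ ((matchGraph η μ).connectedComponentMk x).supp := by
  rw [supp_eq_UU]; exact UU_closed_eta η μ x

lemma supp_closed_mu (η μ : PM n) (x : Fin n × Bool) :
    ∀ a ∈ ((matchGraph η μ).connectedComponentMk x).supp,
      μ.1 a ∈ ((matchGraph η μ).connectedComponentMk x).supp := by
  rw [supp_eq_UU]; exact UU_closed_mu η μ x

lemma core (η μ : PM n) (x : Fin n × Bool) (m j : ℕ) (hm : 2 ≤ m) (hj : j + 2 ≤ m)
    (hd : dd η μ x = m) {y : Fin n × Bool} (hy : y = μ.1 ((ff η μ)^[j] x)) :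
    ∃ η₁ η₂ : PM n, η₁ ≠ η₂ ∧
      (∀ η' : PM n,
        (η' ≠ η ∧ (∀ z, z ∉ swapSet η x y → η'.1 z = η.1 z) ∧
            ∀ z ∈ swapSet η x y, η'.1 z ∈ swapSet η x y)
          ↔ (η' = η₁ ∨ η' = η₂)) ∧
      ((matchGraph η₁ μ).connectedComponentMk x).supp
          = ((matchGraph η μ).connectedComponentMk x).supp ∧
      (∃ m₁ m₂ : ℕ, 1 ≤ m₁ ∧ 1 ≤ m₂ ∧ m₁ + m₂ = m ∧
        ∃ D₁ D₂ : Set (Fin n × Bool), Disjoint D₁ D₂ ∧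
          D₁ ∪ D₂ = ((matchGraph η μ).connectedComponentMk x).supp ∧
          Nat.card D₁ = 2 * m₁ ∧ Nat.card D₂ = 2 * m₂ ∧
          (∀ z ∈ D₁, ((matchGraph η₂ μ).connectedComponentMk z).supp = D₁) ∧
          (∀ z ∈ D₂, ((matchGraph η₂ μ).connectedComponentMk z).supp = D₂)) ∧
      (∀ z, z ∉ ((matchGraph η μ).connectedComponentMk x).supp →
        ((matchGraph η₁ μ).connectedComponentMk z).supp
          = ((matchGraph η μ).connectedComponentMk z).supp) ∧
      (∀ z, z ∉ ((matchGraph η μ).connectedComponentMk x).supp →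
        ((matchGraph η₂ μ).connectedComponentMk z).supp
          = ((matchGraph η μ).connectedComponentMk z).supp) := by
  set f := ff η μ with hf
  have hmp : Function.minimalPeriod f x = m := hd
  have hiterm : f^[m] x = x := by rw [← hd]; exact iter_dd η μ x
  have iter_inj : ∀ {a b : ℕ}, a < m → b < m → f^[a] x = f^[b] x → a = b := by
    intro a b ha hb h
    exact Function.iterate_injOn_Iio_minimalPeriod
      (by rw [hmp]; exact Set.mem_Iio.mpr ha) (by rw [hmp]; exact Set.mem_Iio.mpr hb) h
  have hOmu : ∀ a b : ℕ, f^[a] x ≠ μ.1 (f^[b] x) := by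
    intro a b h
    exact Set.disjoint_left.mp (disj_OO η μ x) ⟨a, rfl⟩ ⟨_, ⟨b, rfl⟩, h.symm⟩
  have hxy : y ≠ x := by
    rw [hy]; intro h; exact hOmu 0 j h.symm
  have hηx : η.1 x = μ.1 (f^[m - 1] x) := by
    have h0 := eta_iter' η μ 0 x
    rw [hd] at h0
    simpa using h0
  have hyηx : y ≠ η.1 x := by
    rw [hy, hηx]
    intro h
    have h2 := μ.1.injective h
    have := iter_inj (by omega) (by omega) h2
    omega
  have hηy : η.1 y = f^[j + 1] x := by
    rw [hy]
    show η.1 (μ.1 (f^[j] x)) = _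
    rw [Function.iterate_succ_apply']
    rfl
  -- membership exclusions
  have hnot1 : ∀ t, t < m → t ≠ j → t ≠ m - 1 → μ.1 (f^[t] x) ∉ swapSet η x y := by
    intro t ht htj htm
    rw [mem_swapSet_iff]
    push_neg
    refine ⟨fun h => hOmu 0 t h.symm, ?_, ?_, ?_⟩
    · rw [hηx]
      intro h
      exact htm (iter_inj ht (by omega) (μ.1.injective h))
    · rw [hy]
      intro h
      exact htj (iter_inj ht (by omega) (μ.1.injective h))
    · rw [hηy]
      intro h
      exact hOmu (j + 1) t h.symm
  have hnot2 : ∀ t, 0 < t → t < m → t ≠ j + 1 → f^[t] x ∉ swapSet η x y := by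
    intro t ht0 htm htj
    rw [mem_swapSet_iff]
    push_neg
    refine ⟨?_, ?_, ?_, ?_⟩
    · intro h
      have : t = 0 := iter_inj (b := 0) htm (by omega) h
      omega
    · rw [hηx]; exact hOmu t (m - 1)
    · rw [hy]; exact hOmu t j
    · rw [hηy]
      intro h
      exact htj (iter_inj htm (by omega) h)
  -- generic step lemmas
  have stepO : ∀ (η' : PM n), (∀ v, v ∉ swapSet η x y → η'.1 v = η.1 v) →
      ∀ t, t < m → t ≠ j → t ≠ m - 1 → ff η' μ (f^[t] x) = f^[t + 1] x := by
    intro η' hout t ht h1 h2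
    show η'.1 (μ.1 (f^[t] x)) = _
    rw [hout _ (hnot1 t ht h1 h2), Function.iterate_succ_apply']
    rfl
  have stepM : ∀ (η' : PM n), (∀ v, v ∉ swapSet η x y → η'.1 v = η.1 v) →
      ∀ t, 0 < t → t < m → t ≠ j + 1 → ff η' μ (μ.1 (f^[t] x)) = μ.1 (f^[t - 1] x) := by
    intro η' hout t ht0 htm htj
    show η'.1 (μ.1 (μ.1 (f^[t] x))) = _
    rw [μ.2.1, hout _ (hnot2 t ht0 htm htj)]
    have e := eta_iter η μ (t - 1) x
    rw [show t - 1 + 1 = t by omega] at e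
    exact e
  -- the two rematchings
  set ηA := pmA η x y with hA
  set ηB := pmB η x y with hB
  have houtA : ∀ v, v ∉ swapSet η x y → ηA.1 v = η.1 v := fun v hv => pmA_out hxy hyηx hv
  have houtB : ∀ v, v ∉ swapSet η x y → ηB.1 v = η.1 v := fun v hv => pmB_out hxy hyηx hv
  have hymem : y = μ.1 (f^[j] x) := hy
  -- special steps
  have stepA_j : ff ηA μ (f^[j] x) = x := by
    show ηA.1 (μ.1 (f^[j] x)) = x
    rw [← hymem]; exact pmA_y hxy hyηx
  have stepA_m : ff ηA μ (f^[m - 1] x) = f^[j + 1] x := by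
    show ηA.1 (μ.1 (f^[m - 1] x)) = _
    rw [← hηx, ← hηy]; exact pmA_ex hxy hyηx
  have stepB_j : ff ηB μ (f^[j] x) = μ.1 (f^[m - 1] x) := by
    show ηB.1 (μ.1 (f^[j] x)) = _
    rw [← hymem, ← hηx]; exact pmB_y hxy hyηx
  have stepB_last : ff ηB μ (μ.1 (f^[j + 1] x)) = x := by
    show ηB.1 (μ.1 (μ.1 (f^[j + 1] x))) = x
    rw [μ.2.1, ← hηy]; exact pmB_ey hxy hyηx
  -- trajectories of ηA
  have trajA1 : ∀ k, k ≤ j → (ff ηA μ)^[k] x = f^[k] x := by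
    intro k hk
    induction k with
    | zero => rfl
    | succ k ih =>
        rw [Function.iterate_succ_apply', ih (by omega),
          stepO ηA houtA k (by omega) (by omega) (by omega)]
  have hA1 : (ff ηA μ)^[j + 1] x = x := by
    rw [Function.iterate_succ_apply', trajA1 j le_rfl, stepA_j]
  have hperA : Function.minimalPeriod (ff ηA μ) x = j + 1 := by
    refine minPeriod_eq _ _ _ (by omega) hA1 ?_
    intro k hk0 hkj h
    rw [trajA1 k (by omega)] at h
    have := iter_inj (b := 0) (by omega) (by omega) h
    omega
  have trajA2 : ∀ i, i ≤ m - j - 2 → (ff ηA μ)^[i] (f^[j + 1] x) = f^[j + 1 + i] x := by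
    intro i hi
    induction i with
    | zero => rfl
    | succ i ih =>
        rw [Function.iterate_succ_apply', ih (by omega),
          stepO ηA houtA (j + 1 + i) (by omega) (by omega) (by omega),
          show j + 1 + i + 1 = j + 1 + (i + 1) by omega]
  have hA2 : (ff ηA μ)^[m - j - 1] (f^[j + 1] x) = f^[j + 1] x := by
    rw [show m - j - 1 = (m - j - 2) + 1 by omega, Function.iterate_succ_apply',
      trajA2 _ le_rfl, show j + 1 + (m - j - 2) = m - 1 by omega, stepA_m]
  have hperA2 : Function.minimalPeriod (ff ηA μ) (f^[j + 1] x) = m - j - 1 := by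
    refine minPeriod_eq _ _ _ (by omega) hA2 ?_
    intro i hi0 hi h
    rw [trajA2 i (by omega)] at h
    have := iter_inj (by omega) (by omega) h
    omega
  -- trajectories of ηB
  have trajB1 : ∀ k, k ≤ j → (ff ηB μ)^[k] x = f^[k] x := by
    intro k hk
    induction k with
    | zero => rfl
    | succ k ih =>
        rw [Function.iterate_succ_apply', ih (by omega),
          stepO ηB houtB k (by omega) (by omega) (by omega)]
  have hB1 : (ff ηB μ)^[j + 1] x = μ.1 (f^[m - 1] x) := by
    rw [Function.iterate_succ_apply', trajB1 j le_rfl, stepB_j]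
  have trajB2 : ∀ i, i ≤ m - j - 2 → (ff ηB μ)^[j + 1 + i] x = μ.1 (f^[m - 1 - i] x) := by
    intro i hi
    induction i with
    | zero => simpa using hB1
    | succ i ih =>
        rw [show j + 1 + (i + 1) = (j + 1 + i) + 1 by omega,
          Function.iterate_succ_apply', ih (by omega),
          stepM ηB houtB (m - 1 - i) (by omega) (by omega) (by omega),
          show m - 1 - i - 1 = m - 1 - (i + 1) by omega]
  have hB3 : (ff ηB μ)^[m] x = x := by
    rw [show m = (j + 1 + (m - j - 2)) + 1 by omega, Function.iterate_succ_apply',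
      trajB2 _ le_rfl, show m - 1 - (m - j - 2) = j + 1 by omega, stepB_last]
  have hperB : Function.minimalPeriod (ff ηB μ) x = m := by
    refine minPeriod_eq _ _ _ (by omega) hB3 ?_
    intro k hk0 hk h
    rcases le_or_gt k j with hkj | hkj
    · rw [trajB1 k hkj] at h
      have := iter_inj (b := 0) (by omega) (by omega) h
      omega
    · have hk' : k = j + 1 + (k - j - 1) := by omega
      rw [hk', trajB2 (k - j - 1) (by omega)] at h
      exact hOmu 0 (m - 1 - (k - j - 1)) h.symm
  -- the big component and its subsets
  set S := ((matchGraph η μ).connectedComponentMk x).supp with hS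
  have hcardS : S.ncard = 2 * m := by
    rw [hS, supp_eq_UU, ncard_UU, hd]
  have swapSubS : (swapSet η x y : Set (Fin n × Bool)) ⊆ S := by
    intro v hv
    rw [hS, supp_eq_UU]
    rw [Finset.mem_coe, mem_swapSet_iff] at hv
    rcases hv with rfl | rfl | rfl | rfl
    · exact Or.inl ⟨0, rfl⟩
    · rw [hηx]; exact Or.inr ⟨_, ⟨m - 1, rfl⟩, rfl⟩
    · rw [hy]; exact Or.inr ⟨_, ⟨j, rfl⟩, rfl⟩
    · rw [hηy]; exact Or.inl ⟨j + 1, rfl⟩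
  have hSclosed : ∀ (η' : PM n), (∀ v, v ∉ swapSet η x y → η'.1 v = η.1 v) →
      (∀ z ∈ swapSet η x y, η'.1 z ∈ swapSet η x y) → ∀ a ∈ S, η'.1 a ∈ S := by
    intro η' hout hin a ha
    by_cases hmem : a ∈ swapSet η x y
    · exact swapSubS (hin a hmem)
    · rw [hout a hmem]
      exact supp_closed_eta η μ x a ha
  have hxS : x ∈ S := (SimpleGraph.ConnectedComponent.mem_supp_iff _ _).mpr rfl
  have hz2S : f^[j + 1] x ∈ S := swapSubS (by rw [← hηy, Finset.mem_coe, mem_swapSet_iff]; tauto)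
  -- supp of ηB at x equals S
  have hsubB : ((matchGraph ηB μ).connectedComponentMk x).supp ⊆ S :=
    supp_subset_of_closed
      (matchGraph_closed (hSclosed ηB houtB (pmB_maps hxy hyηx)) (supp_closed_mu η μ x)) hxS
  have hcardB : ((matchGraph ηB μ).connectedComponentMk x).supp.ncard = 2 * m := by
    rw [supp_eq_UU, ncard_UU]
    show 2 * Function.minimalPeriod (ff ηB μ) x = 2 * m
    rw [hperB]
  have hsuppB : ((matchGraph ηB μ).connectedComponentMk x).supp = S :=
    Set.eq_of_subset_of_ncard_le hsubB (by rw [hcardB, hcardS]) (Set.toFinite _)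
  -- supps of ηA
  set D₁ := ((matchGraph ηA μ).connectedComponentMk x).supp with hD₁
  set D₂ := ((matchGraph ηA μ).connectedComponentMk (f^[j + 1] x)).supp with hD₂
  have hcardD₁ : D₁.ncard = 2 * (j + 1) := by
    rw [hD₁, supp_eq_UU, ncard_UU]
    show 2 * Function.minimalPeriod (ff ηA μ) x = _
    rw [hperA]
  have hcardD₂ : D₂.ncard = 2 * (m - j - 1) := by
    rw [hD₂, supp_eq_UU, ncard_UU]
    show 2 * Function.minimalPeriod (ff ηA μ) (f^[j + 1] x) = _
    rw [hperA2]
  have hz2D₁ : f^[j + 1] x ∉ D₁ := by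
    intro hmem
    rw [hD₁, supp_eq_UU] at hmem
    rcases hmem with ⟨k, hk⟩ | ⟨w, ⟨k, hk⟩, hw⟩
    all_goals
      have hklt : k % (j + 1) < j + 1 := Nat.mod_lt _ (by omega)
      have hmod : (ff ηA μ)^[k % (j + 1)] x = (ff ηA μ)^[k] x := by
        rw [← hperA]
        exact Function.iterate_mod_minimalPeriod_eq
    · -- f_A^[k] x = f^[j+1] x
      have hk' : (ff ηA μ)^[k % (j + 1)] x = f^[j + 1] x := hmod.trans hk
      rw [trajA1 _ (by omega)] at hk'
      have := iter_inj (by omega) (by omega) hk'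
      omega
    · -- μ (f_A^[k] x) = f^[j+1] x
      have hk' : μ.1 ((ff ηA μ)^[k % (j + 1)] x) = f^[j + 1] x := by
        rw [hmod, ← hw, ← hk]
      rw [trajA1 _ (by omega)] at hk'
      exact hOmu (j + 1) (k % (j + 1)) hk'.symm
  have hdisjD : Disjoint D₁ D₂ := by
    rw [Set.disjoint_left]
    intro v hv1 hv2
    apply hz2D₁
    rw [hD₁, SimpleGraph.ConnectedComponent.mem_supp_iff] at hv1 ⊢
    rw [hD₂, SimpleGraph.ConnectedComponent.mem_supp_iff] at hv2
    rw [← hv2, hv1]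
  have hsubD₁ : D₁ ⊆ S :=
    supp_subset_of_closed
      (matchGraph_closed (hSclosed ηA houtA (pmA_maps hxy hyηx)) (supp_closed_mu η μ x)) hxS
  have hsubD₂ : D₂ ⊆ S :=
    supp_subset_of_closed
      (matchGraph_closed (hSclosed ηA houtA (pmA_maps hxy hyηx)) (supp_closed_mu η μ x)) hz2S
  have hunion : D₁ ∪ D₂ = S := by
    apply Set.eq_of_subset_of_ncard_le (Set.union_subset hsubD₁ hsubD₂)
    rw [Set.ncard_union_eq hdisjD (Set.toFinite _) (Set.toFinite _),
      hcardD₁, hcardD₂, hcardS]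
    omega
  -- assemble
  refine ⟨ηB, ηA, fun h => pmA_ne_pmB hxy hyηx h.symm, ?_, hsuppB, ?_, ?_, ?_⟩
  · intro η'
    exact (compat_iff hxy hyηx η').trans or_comm
  · refine ⟨j + 1, m - j - 1, by omega, by omega, by omega, D₁, D₂, hdisjD, hunion,
      ?_, ?_, ?_, ?_⟩
    · rw [Nat.card_coe_set_eq, hcardD₁]
    · rw [Nat.card_coe_set_eq, hcardD₂]
    · intro z hz
      rw [hD₁, SimpleGraph.ConnectedComponent.mem_supp_iff] at hz
      rw [hD₁, ← hz]
    · intro z hz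
      rw [hD₂, SimpleGraph.ConnectedComponent.mem_supp_iff] at hz
      rw [hD₂, ← hz]
  · intro z hz
    exact supp_untouched η ηB μ x
      (fun v hv => houtB v (fun c => hv (Finset.mem_coe.mpr c))) swapSubS z hz
  · intro z hz
    exact supp_untouched η ηA μ x
      (fun v hv => houtA v (fun c => hv (Finset.mem_coe.mpr c))) swapSubS z hz

end SwapAux

open SwapAux

/-- let `x, y` lie in distinct pairs of `η` belonging to the *same*
component of `η ⊎ id_n`, a cycle of length `2m` with `m ≥ 2`.  Among the two matchings
`η' ≠ η` agreeing with `η` outside those two pairs and rematching their four elements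
differently, exactly one keeps that component a single cycle on the same vertex set,
while for the other the component splits into two cycles of lengths `2m₁` and `2m₂`
with `m₁ + m₂ = m`, `m₁, m₂ ≥ 1`; in both cases all other components are unchanged. -/
theorem swap_same_component_split (n : ℕ) (η : PM n) (x y : Fin n × Bool) (m : ℕ)
    (hm : 2 ≤ m)
    (hreach : (matchGraph η (idPM n)).Reachable x y)
    (hp1 : y ≠ x) (hp2 : y ≠ η.1 x)
    (hsize : Nat.card ((matchGraph η (idPM n)).connectedComponentMk x).supp = 2 * m) :
    ∃ η₁ η₂ : PM n, η₁ ≠ η₂ ∧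
      (∀ η' : PM n,
        (η' ≠ η ∧ (∀ z, z ∉ swapSet η x y → η'.1 z = η.1 z) ∧
            ∀ z ∈ swapSet η x y, η'.1 z ∈ swapSet η x y)
          ↔ (η' = η₁ ∨ η' = η₂)) ∧
      ((matchGraph η₁ (idPM n)).connectedComponentMk x).supp
          = ((matchGraph η (idPM n)).connectedComponentMk x).supp ∧
      (∃ m₁ m₂ : ℕ, 1 ≤ m₁ ∧ 1 ≤ m₂ ∧ m₁ + m₂ = m ∧
        ∃ D₁ D₂ : Set (Fin n × Bool), Disjoint D₁ D₂ ∧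
          D₁ ∪ D₂ = ((matchGraph η (idPM n)).connectedComponentMk x).supp ∧
          Nat.card D₁ = 2 * m₁ ∧ Nat.card D₂ = 2 * m₂ ∧
          (∀ z ∈ D₁, ((matchGraph η₂ (idPM n)).connectedComponentMk z).supp = D₁) ∧
          (∀ z ∈ D₂, ((matchGraph η₂ (idPM n)).connectedComponentMk z).supp = D₂)) ∧
      (∀ z, z ∉ ((matchGraph η (idPM n)).connectedComponentMk x).supp →
        ((matchGraph η₁ (idPM n)).connectedComponentMk z).supp
          = ((matchGraph η (idPM n)).connectedComponentMk z).supp) ∧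
      (∀ z, z ∉ ((matchGraph η (idPM n)).connectedComponentMk x).supp →
        ((matchGraph η₂ (idPM n)).connectedComponentMk z).supp
          = ((matchGraph η (idPM n)).connectedComponentMk z).supp) := by
  set μ := idPM n with hμdef
  have hd : dd η μ x = m := by
    have hc := card_supp η μ x
    rw [hsize] at hc
    omega
  set f := ff η μ with hf
  have hmod : ∀ k : ℕ, f^[k % m] x = f^[k] x := by
    intro k
    rw [← hd]
    exact Function.iterate_mod_minimalPeriod_eq
  have hηx : η.1 x = μ.1 (f^[m - 1] x) := by
    have h0 := eta_iter' η μ 0 x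
    rw [hd] at h0
    simpa using h0
  have hymem : y ∈ UU η μ x := by
    rw [← supp_eq_UU]
    exact (SimpleGraph.ConnectedComponent.mem_supp_iff _ _).mpr
      (SimpleGraph.ConnectedComponent.eq.mpr hreach.symm)
  rcases hymem with ⟨k, hk⟩ | ⟨w, ⟨k, hk⟩, hw⟩
  · -- y at an "even" position : use `η.1 y` instead
    have hy0 : y = f^[k % m] x := by rw [hmod]; exact hk.symm
    have hj0 : k % m < m := Nat.mod_lt _ (by omega)
    have hj0ne : k % m ≠ 0 := by
      intro h
      rw [h] at hy0
      exact hp1 hy0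
    have hy' : η.1 y = μ.1 (f^[k % m - 1] x) := by
      have he := eta_iter η μ (k % m - 1) x
      rw [show k % m - 1 + 1 = k % m by omega] at he
      rw [hy0, he]
    obtain ⟨η₁, η₂, hne, hiff, hrest⟩ :=
      core η μ x m (k % m - 1) hm (by omega) hd hy'
    rw [swapSet_symm] at hiff
    exact ⟨η₁, η₂, hne, hiff, hrest⟩
  · -- y at an "odd" position
    have hy0 : y = μ.1 (f^[k % m] x) := by rw [hmod, ← hw, ← hk]
    have hj0 : k % m < m := Nat.mod_lt _ (by omega)
    have hjne : k % m ≠ m - 1 := by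
      intro h
      rw [h] at hy0
      rw [← hηx] at hy0
      exact hp2 hy0
    exact core η μ x m (k % m) hm (by omega) hd hy0

end
end
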